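/- Consider a BPVE with first moments m_n > 0 and second moments m_n^{(2)} satisfying m_n^{(2)} < ∞ for every sufficiently large n. If lim_{n→∞} m_n = +∞ and there exist M, k ≥ 1 such that m_n^{(2)}/m_n² ≤ k·M^n for all sufficiently large n, then the BPVE survives, i.e. p_e < 1. -/

import Mathlib

open Filter ENNReal

/-- Probability generating function `Φ_n(z) := ∑_i ρ_n(i) z^i` of the `n`-th offspring
distribution of a branching process in varying environment (BPVE). -/
noncomputable def Phi (ρ : ℕ → ℕ → ℝ) (n : ℕ) (z : ℝ) : ℝ :=
  ∑' i : ℕ, ρ n i * z ^ i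

/-- The iterated generating functions `H_0(z) := z`, `H_{n+1} := H_n ∘ Φ_n`;
`H_n(0)` is the probability of extinction by generation `n`, and the extinction
probability is `p_e = lim_n H_n(0)`. -/
noncomputable def Hseq (ρ : ℕ → ℕ → ℝ) : ℕ → ℝ → ℝ
  | 0 => fun z => z
  | n + 1 => fun z => Hseq ρ n (Phi ρ n z)

/-- First moment `m_n := ∑_i i ρ_n(i) ∈ [0,∞]` of the `n`-th offspring distribution. -/
noncomputable def mom (ρ : ℕ → ℕ → ℝ) (n : ℕ) : ℝ≥0∞ :=
  ∑' i : ℕ, (i : ℝ≥0∞) * ENNReal.ofReal (ρ n i)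

/-- Second moment `m_n⁽²⁾ := ∑_i i² ρ_n(i) ∈ [0,∞]` of the `n`-th offspring
distribution. -/
noncomputable def mom2 (ρ : ℕ → ℕ → ℝ) (n : ℕ) : ℝ≥0∞ :=
  ∑' i : ℕ, (i : ℝ≥0∞) ^ 2 * ENNReal.ofReal (ρ n i)

/-! Agresti's bound `1/(1 - Φ_n(z)) ≤ 1/(m_n (1 - z)) + m_n⁽²⁾/m_n²`, a form of Chebyshev's sum
inequality, holds once `m_n⁽²⁾ < ∞`; for the finitely many earlier generations the crude bound
`1/(1 - Φ_n(z)) ≤ 1/((1 - ρ_n(0)) (1 - z))` replaces it. Iterating along `H_{n+1} = H_n ∘ Φ_n` gives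
`1/(1 - H_n(0)) ≤ ∏_{j<n} r_j + ∑_{j<n} (∏_{i<j} r_i) c_j` with `r_j = 1/m_j ≤ 1/(2M)` and
`c_j ≤ k Mʲ` eventually, so the `j`-th summand decays like `2⁻ʲ`. The right side is therefore
bounded by some `C`, and `p_e ≤ 1 - 1/C < 1`. -/

open Finset Set

section PowInequalities

variable {z : ℝ}

theorem one_sub_mul_mul_pow_le (hz0 : 0 ≤ z) (hz1 : z ≤ 1) (n : ℕ) :
    (1 - z) * n * z ^ n ≤ 1 - z ^ n := by
  have hsum : (n : ℝ) * z ^ n ≤ ∑ j ∈ range n, z ^ j := by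
    simpa using card_nsmul_le_sum (range n) (z ^ ·) (z ^ n)
      fun j hj => pow_le_pow_of_le_one hz0 hz1 (mem_range.1 hj).le
  have hgeom : 1 - z ^ n = (1 - z) * ∑ j ∈ range n, z ^ j := by
    linear_combination geom_sum_mul z n
  rw [hgeom, mul_assoc]
  exact mul_le_mul_of_nonneg_left hsum (by linarith)

theorem mul_one_sub_pow_le_mul_one_sub_pow (hz0 : 0 ≤ z) (hz1 : z ≤ 1) {i j : ℕ} (hij : i ≤ j) :
    i * (1 - z ^ j) ≤ j * (1 - z ^ i) := by
  induction j, hij using Nat.le_induction with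
  | base => rfl
  | succ j hij ih =>
    have hpow : z ^ j ≤ z ^ i := pow_le_pow_of_le_one hz0 hz1 hij
    have hi := one_sub_mul_mul_pow_le hz0 hz1 i
    have hi0 : (0 : ℝ) ≤ i := i.cast_nonneg
    have hstep := mul_le_mul_of_nonneg_left hpow (mul_nonneg (sub_nonneg.2 hz1) hi0)
    push_cast
    rw [pow_succ]
    linear_combination ih + hstep + hi

theorem mul_mul_one_sub_pow_add_le (hz0 : 0 ≤ z) (hz1 : z ≤ 1) (i j : ℕ) :
    (i : ℝ) * (j * (1 - z ^ j)) + j * (i * (1 - z ^ i)) ≤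
      (1 - z ^ i) * j ^ 2 + (1 - z ^ j) * i ^ 2 := by
  suffices 0 ≤ ((j : ℝ) - i) * (j * (1 - z ^ i) - i * (1 - z ^ j)) by linarith
  rcases le_total i j with h | h
  · exact mul_nonneg (sub_nonneg.2 (by exact_mod_cast h))
      (sub_nonneg.2 (mul_one_sub_pow_le_mul_one_sub_pow hz0 hz1 h))
  · exact mul_nonneg_of_nonpos_of_nonpos (sub_nonpos.2 (by exact_mod_cast h))
      (sub_nonpos.2 (mul_one_sub_pow_le_mul_one_sub_pow hz0 hz1 h))

end PowInequalities

theorem ENNReal.tsum_mul_tsum_le_of_forall_add_le {α : Type*} {f g h k : α → ℝ≥0∞}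
    (H : ∀ i j, f i * g j + f j * g i ≤ h i * k j + h j * k i) :
    (∑' i, f i) * ∑' j, g j ≤ (∑' i, h i) * ∑' j, k j := by
  have hsymm : ∀ u v : α → ℝ≥0∞,
      2 * ((∑' i, u i) * ∑' j, v j) = ∑' i, ∑' j, (u i * v j + u j * v i) := by
    intro u v
    simp only [ENNReal.tsum_add, ENNReal.tsum_mul_left, ENNReal.tsum_mul_right]
    ring
  rw [← ENNReal.mul_le_mul_iff_right two_ne_zero ofNat_ne_top, hsymm, hsymm]
  exact ENNReal.tsum_le_tsum fun i => ENNReal.tsum_le_tsum fun j => H i j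

section Distribution

variable {ρ : ℕ → ℕ → ℝ} {n : ℕ} {z : ℝ}

theorem hasSum_phi (hρ0 : ∀ i, 0 ≤ ρ n i) (hρ1 : HasSum (ρ n) 1) (hz0 : 0 ≤ z) (hz1 : z ≤ 1) :
    HasSum (fun i => ρ n i * z ^ i) (Phi ρ n z) :=
  (Summable.of_nonneg_of_le (fun i => mul_nonneg (hρ0 i) (pow_nonneg hz0 i))
    (fun i => mul_le_of_le_one_right (hρ0 i) (pow_le_one₀ hz0 hz1)) hρ1.summable).hasSum

theorem phi_le (hρ0 : ∀ i, 0 ≤ ρ n i) (hρ1 : HasSum (ρ n) 1) (hz0 : 0 ≤ z) (hz1 : z ≤ 1) :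
    Phi ρ n z ≤ z + (1 - z) * ρ n 0 := by
  have hdom : HasSum (fun i => z * ρ n i + (1 - z) * if i = 0 then ρ n 0 else 0)
      (z * 1 + (1 - z) * ρ n 0) :=
    (hρ1.mul_left z).add ((hasSum_ite_eq 0 (ρ n 0)).mul_left (1 - z))
  refine (hasSum_le (fun i => ?_) (hasSum_phi hρ0 hρ1 hz0 hz1) hdom).trans_eq (by ring)
  rcases i with _ | i
  · simp only [pow_zero, mul_one, if_true]
    linarith
  · have : z ^ (i + 1) ≤ z := pow_le_of_le_one hz0 hz1 i.succ_ne_zero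
    simp only [Nat.succ_ne_zero, if_false, mul_zero, add_zero]
    nlinarith [hρ0 (i + 1)]

theorem phi_mapsTo (hρ0 : ∀ i, 0 ≤ ρ n i) (hρ1 : HasSum (ρ n) 1) (hρlt : ρ n 0 < 1) :
    MapsTo (Phi ρ n) (Ico 0 1) (Ico 0 1) := fun z ⟨hz0, hz1⟩ =>
  ⟨tsum_nonneg fun i => mul_nonneg (hρ0 i) (pow_nonneg hz0 i), by
    nlinarith [phi_le hρ0 hρ1 hz0 hz1.le]⟩

theorem inv_one_sub_phi_le (hρ0 : ∀ i, 0 ≤ ρ n i) (hρ1 : HasSum (ρ n) 1) (hρlt : ρ n 0 < 1)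
    (hz : z ∈ Ico (0 : ℝ) 1) :
    (1 - Phi ρ n z)⁻¹ ≤ (1 - ρ n 0)⁻¹ * (1 - z)⁻¹ := by
  have hpos : 0 < (1 - ρ n 0) * (1 - z) := mul_pos (by linarith) (by linarith [hz.2])
  rw [← mul_inv]
  exact inv_anti₀ hpos (by nlinarith [phi_le hρ0 hρ1 hz.1 hz.2.le])

theorem mom_le_mom2 : mom ρ n ≤ mom2 ρ n := by
  refine ENNReal.tsum_le_tsum fun i => mul_le_mul_left ?_ _
  rcases i with _ | i
  · simp
  · exact le_self_pow₀ (by exact_mod_cast i.succ_pos) two_ne_zero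

end Distribution

section Agresti

variable {ρ : ℕ → ℕ → ℝ} {n : ℕ} {z : ℝ}

noncomputable def pgfDefect (ρ : ℕ → ℕ → ℝ) (n : ℕ) (z : ℝ) (i : ℕ) : ℝ≥0∞ :=
  ENNReal.ofReal (1 - z ^ i) * ENNReal.ofReal (ρ n i)

theorem tsum_pgfDefect (hρ0 : ∀ i, 0 ≤ ρ n i) (hρ1 : HasSum (ρ n) 1) (hz0 : 0 ≤ z)
    (hz1 : z ≤ 1) : ∑' i, pgfDefect ρ n z i = ENNReal.ofReal (1 - Phi ρ n z) := by
  have h : HasSum (fun i => (1 - z ^ i) * ρ n i) (1 - Phi ρ n z) :=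
    (hρ1.sub (hasSum_phi hρ0 hρ1 hz0 hz1)).congr_fun fun i => by ring
  have hb : ∀ i : ℕ, 0 ≤ 1 - z ^ i := fun i => sub_nonneg.2 (pow_le_one₀ hz0 hz1)
  rw [← h.tsum_eq, ENNReal.ofReal_tsum_of_nonneg (fun i => mul_nonneg (hb i) (hρ0 i)) h.summable]
  exact tsum_congr fun i => (ENNReal.ofReal_mul (hb i)).symm

theorem ofReal_one_sub_mul_mom_le (hz0 : 0 ≤ z) (hz1 : z ≤ 1) :
    ENNReal.ofReal (1 - z) * mom ρ n ≤
      ENNReal.ofReal (1 - z) * ∑' i : ℕ, i * pgfDefect ρ n z i + ∑' i, pgfDefect ρ n z i := by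
  rw [mom, ← ENNReal.tsum_mul_left, ← ENNReal.tsum_mul_left, ← ENNReal.tsum_add]
  refine ENNReal.tsum_le_tsum fun i => ?_
  have hq : 0 ≤ 1 - z := sub_nonneg.2 hz1
  have hqi : 0 ≤ (1 - z) * i := mul_nonneg hq i.cast_nonneg
  have hb : 0 ≤ 1 - z ^ i := sub_nonneg.2 (pow_le_one₀ hz0 hz1)
  have key : ENNReal.ofReal ((1 - z) * i) ≤
      ENNReal.ofReal ((1 - z) * i * (1 - z ^ i) + (1 - z ^ i)) :=
    ENNReal.ofReal_le_ofReal (by linarith [one_sub_mul_mul_pow_le hz0 hz1 i])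
  rw [ENNReal.ofReal_add (mul_nonneg hqi hb) hb, ENNReal.ofReal_mul hqi, ENNReal.ofReal_mul hq,
    ENNReal.ofReal_natCast] at key
  calc ENNReal.ofReal (1 - z) * (i * ENNReal.ofReal (ρ n i))
      = ENNReal.ofReal (1 - z) * i * ENNReal.ofReal (ρ n i) := by ring
    _ ≤ (ENNReal.ofReal (1 - z) * i * ENNReal.ofReal (1 - z ^ i) + ENNReal.ofReal (1 - z ^ i)) *
        ENNReal.ofReal (ρ n i) := by gcongr
    _ = _ := by simp only [pgfDefect]; ring

/-- Chebyshev's sum inequality: `i ↦ (1 - z^i)/i` decreases while `i ↦ i` increases. -/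
theorem mom_mul_le_mul_mom2 (hz0 : 0 ≤ z) (hz1 : z ≤ 1) :
    mom ρ n * ∑' i : ℕ, i * pgfDefect ρ n z i ≤ (∑' i, pgfDefect ρ n z i) * mom2 ρ n := by
  refine ENNReal.tsum_mul_tsum_le_of_forall_add_le fun i j => ?_
  have hb : ∀ l : ℕ, 0 ≤ 1 - z ^ l := fun l => sub_nonneg.2 (pow_le_one₀ hz0 hz1)
  have key := ENNReal.ofReal_le_ofReal (mul_mul_one_sub_pow_add_le hz0 hz1 i j)
  have hi := i.cast_nonneg (α := ℝ)
  have hj := j.cast_nonneg (α := ℝ)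
  rw [ENNReal.ofReal_add (mul_nonneg hi (mul_nonneg hj (hb j)))
      (mul_nonneg hj (mul_nonneg hi (hb i))),
    ENNReal.ofReal_add (mul_nonneg (hb i) (sq_nonneg _)) (mul_nonneg (hb j) (sq_nonneg _))] at key
  simp only [ENNReal.ofReal_mul (Nat.cast_nonneg _), ENNReal.ofReal_mul (hb _),
    ENNReal.ofReal_pow (Nat.cast_nonneg _), ENNReal.ofReal_natCast] at key
  set p := ENNReal.ofReal (ρ n i)
  set q := ENNReal.ofReal (ρ n j)
  calc (i : ℝ≥0∞) * p * (j * pgfDefect ρ n z j) + j * q * (i * pgfDefect ρ n z i)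
      = p * q * (i * (j * ENNReal.ofReal (1 - z ^ j)) + j * (i * ENNReal.ofReal (1 - z ^ i))) := by
        simp only [pgfDefect]; ring
    _ ≤ p * q * (ENNReal.ofReal (1 - z ^ i) * j ^ 2 + ENNReal.ofReal (1 - z ^ j) * i ^ 2) := by
        gcongr
    _ = _ := by simp only [pgfDefect]; ring

/-- Agresti's bound `1/(1 - Φ(z)) ≤ 1/(m (1 - z)) + m⁽²⁾/m²`, cleared of denominators. -/
theorem mom_sq_mul_le (hρ0 : ∀ i, 0 ≤ ρ n i) (hρ1 : HasSum (ρ n) 1) (hz0 : 0 ≤ z) (hz1 : z ≤ 1) :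
    mom ρ n ^ 2 * ENNReal.ofReal (1 - z) ≤
      ENNReal.ofReal (1 - Phi ρ n z) * (mom ρ n + ENNReal.ofReal (1 - z) * mom2 ρ n) := by
  rw [← tsum_pgfDefect hρ0 hρ1 hz0 hz1]
  set S := ∑' i : ℕ, i * pgfDefect ρ n z i
  set U := ∑' i, pgfDefect ρ n z i
  set q := ENNReal.ofReal (1 - z)
  calc mom ρ n ^ 2 * q = mom ρ n * (q * mom ρ n) := by ring
    _ ≤ mom ρ n * (q * S + U) := by gcongr; exact ofReal_one_sub_mul_mom_le hz0 hz1
    _ = q * (mom ρ n * S) + mom ρ n * U := by ring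
    _ ≤ q * (U * mom2 ρ n) + mom ρ n * U := by gcongr q * ?_ + _; exact mom_mul_le_mul_mom2 hz0 hz1
    _ = U * (mom ρ n + q * mom2 ρ n) := by ring

theorem inv_one_sub_phi_le_agresti (hρ0 : ∀ i, 0 ≤ ρ n i) (hρ1 : HasSum (ρ n) 1)
    (hm : mom ρ n ≠ 0) (hm2 : mom2 ρ n ≠ ⊤) (hz : z ∈ Ico (0 : ℝ) 1) :
    (1 - Phi ρ n z)⁻¹ ≤ (mom ρ n).toReal⁻¹ * (1 - z)⁻¹ + (mom2 ρ n / mom ρ n ^ 2).toReal := by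
  have hmtop : mom ρ n ≠ ⊤ := ne_top_of_le_ne_top hm2 mom_le_mom2
  have hq : 0 < 1 - z := sub_pos.2 hz.2
  have key := mom_sq_mul_le hρ0 hρ1 hz.1 hz.2.le
  have hu : 0 < 1 - Phi ρ n z := by
    by_contra! h
    rw [ENNReal.ofReal_of_nonpos h, zero_mul, nonpos_iff_eq_zero] at key
    exact mul_ne_zero (pow_ne_zero 2 hm) (ENNReal.ofReal_pos.2 hq).ne' key
  have hm_pos : 0 < (mom ρ n).toReal := ENNReal.toReal_pos hm hmtop
  have key' := ENNReal.toReal_mono (by finiteness) key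
  rw [ENNReal.toReal_mul, ENNReal.toReal_mul, ENNReal.toReal_add hmtop (by finiteness),
    ENNReal.toReal_mul, ENNReal.toReal_pow, ENNReal.toReal_ofReal hq.le,
    ENNReal.toReal_ofReal hu.le] at key'
  rw [ENNReal.toReal_div, ENNReal.toReal_pow, inv_le_iff_one_le_mul₀' hu]
  field_simp
  nlinarith [key']

end Agresti

section Iteration

variable {ρ : ℕ → ℕ → ℝ}

theorem mapsTo_hseq (hρ0 : ∀ n i, 0 ≤ ρ n i) (hρ1 : ∀ n, HasSum (ρ n) 1)
    (hρlt : ∀ n, ρ n 0 < 1) (n : ℕ) : MapsTo (Hseq ρ n) (Ico 0 1) (Ico 0 1) := by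
  induction n with
  | zero => exact mapsTo_id _
  | succ n ih => exact ih.comp (phi_mapsTo (hρ0 n) (hρ1 n) (hρlt n))

theorem inv_one_sub_hseq_le (r c : ℕ → ℝ) (hr : ∀ j, 0 ≤ r j)
    (hmaps : ∀ j, MapsTo (Phi ρ j) (Ico 0 1) (Ico 0 1))
    (hstep : ∀ j, ∀ z ∈ Ico (0 : ℝ) 1, (1 - Phi ρ j z)⁻¹ ≤ r j * (1 - z)⁻¹ + c j) (n : ℕ) :
    ∀ z ∈ Ico (0 : ℝ) 1, (1 - Hseq ρ n z)⁻¹ ≤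
      (∏ j ∈ range n, r j) * (1 - z)⁻¹ + ∑ j ∈ range n, (∏ i ∈ range j, r i) * c j := by
  induction n with
  | zero => simp [Hseq]
  | succ n ih =>
    intro z hz
    have hprod : 0 ≤ ∏ j ∈ range n, r j := prod_nonneg fun j _ => hr j
    calc (1 - Hseq ρ n (Phi ρ n z))⁻¹
        ≤ (∏ j ∈ range n, r j) * (1 - Phi ρ n z)⁻¹ + ∑ j ∈ range n, (∏ i ∈ range j, r i) * c j :=
          ih _ (hmaps n hz)
      _ ≤ (∏ j ∈ range n, r j) * (r n * (1 - z)⁻¹ + c n) +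
            ∑ j ∈ range n, (∏ i ∈ range j, r i) * c j := by
          gcongr; exact hstep n z hz
      _ = _ := by rw [prod_range_succ, sum_range_succ]; ring

end Iteration

section AgrestiFactor

variable {ρ : ℕ → ℕ → ℝ} {N j : ℕ}

/-- The factor `r_j` and error `c_j` of the crude bound `inv_one_sub_phi_le` before generation `N`
and of Agresti's bound from `N` on. -/
noncomputable def agrestiFactor (ρ : ℕ → ℕ → ℝ) (N j : ℕ) : ℝ :=
  if j < N then (1 - ρ j 0)⁻¹ else (mom ρ j).toReal⁻¹

noncomputable def agrestiError (ρ : ℕ → ℕ → ℝ) (N j : ℕ) : ℝ :=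
  if j < N then 0 else (mom2 ρ j / mom ρ j ^ 2).toReal

theorem inv_one_sub_phi_le_agrestiFactor (hρ0 : ∀ i, 0 ≤ ρ j i) (hρ1 : HasSum (ρ j) 1)
    (hρlt : ρ j 0 < 1) (hN : N ≤ j → mom ρ j ≠ 0 ∧ mom2 ρ j ≠ ⊤) {z : ℝ} (hz : z ∈ Ico (0 : ℝ) 1) :
    (1 - Phi ρ j z)⁻¹ ≤ agrestiFactor ρ N j * (1 - z)⁻¹ + agrestiError ρ N j := by
  unfold agrestiFactor agrestiError
  split_ifs with hj
  · simpa using inv_one_sub_phi_le hρ0 hρ1 hρlt hz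
  · obtain ⟨hm, hm2⟩ := hN (not_lt.1 hj)
    exact inv_one_sub_phi_le_agresti hρ0 hρ1 hm hm2 hz

theorem agrestiFactor_nonneg (hρlt : ρ j 0 < 1) : 0 ≤ agrestiFactor ρ N j := by
  unfold agrestiFactor
  split_ifs
  · exact inv_nonneg.2 (sub_nonneg.2 hρlt.le)
  · exact inv_nonneg.2 ENNReal.toReal_nonneg

theorem agrestiFactor_mul_le {M : ℝ} (hM : 0 < M) (hj : N ≤ j) (hm : mom ρ j ≠ ⊤)
    (hmM : ENNReal.ofReal (2 * M) ≤ mom ρ j) : agrestiFactor ρ N j * M ≤ 2⁻¹ := by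
  have h2M := (ENNReal.ofReal_le_iff_le_toReal hm).1 hmM
  rw [agrestiFactor, if_neg (not_lt.2 hj), inv_mul_le_iff₀ (by linarith)]
  linarith

theorem agrestiError_le {M k : ℝ} (hM : 0 ≤ M) (hk : 0 ≤ k)
    (hbound : N ≤ j → mom2 ρ j / mom ρ j ^ 2 ≤ ENNReal.ofReal (k * M ^ j)) :
    agrestiError ρ N j ≤ k * M ^ j := by
  unfold agrestiError
  split_ifs with hj
  · positivity
  · exact ENNReal.toReal_le_of_le_ofReal (by positivity) (hbound (not_lt.1 hj))

end AgrestiFactor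

theorem exists_forall_prod_add_sum_prod_mul_le {r c : ℕ → ℝ} {M k : ℝ} (hr : ∀ j, 0 ≤ r j)
    (hM : 1 ≤ M) (hk : 0 ≤ k) (hrM : ∀ᶠ j in atTop, r j * M ≤ 2⁻¹) (hc : ∀ j, c j ≤ k * M ^ j) :
    ∃ C, ∀ n, (∏ j ∈ range n, r j) + ∑ j ∈ range n, (∏ i ∈ range j, r i) * c j ≤ C := by
  set f : ℕ → ℝ := fun j => (∏ i ∈ range j, r i) * M ^ j
  have hprod : ∀ j, 0 ≤ ∏ i ∈ range j, r i := fun j => prod_nonneg fun i _ => hr i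
  have hf0 : ∀ j, 0 ≤ f j := fun j => mul_nonneg (hprod j) (by positivity)
  have hf : Summable f := by
    refine summable_of_ratio_norm_eventually_le (by norm_num : (2⁻¹ : ℝ) < 1)
      (hrM.mono fun j hj => ?_)
    rw [Real.norm_of_nonneg (hf0 _), Real.norm_of_nonneg (hf0 _)]
    calc f (j + 1) = (r j * M) * f j := by simp only [f, prod_range_succ, pow_succ]; ring
      _ ≤ 2⁻¹ * f j := mul_le_mul_of_nonneg_right hj (hf0 j)
  refine ⟨(1 + k) * ∑' j, f j, fun n => ?_⟩
  have hfirst : ∏ j ∈ range n, r j ≤ ∑' j, f j :=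
    (le_mul_of_one_le_right (hprod n) (one_le_pow₀ hM)).trans (hf.le_tsum n fun j _ => hf0 j)
  have hsecond : ∑ j ∈ range n, (∏ i ∈ range j, r i) * c j ≤ k * ∑' j, f j :=
    calc ∑ j ∈ range n, (∏ i ∈ range j, r i) * c j ≤ ∑ j ∈ range n, k * f j :=
          sum_le_sum fun j _ => (mul_le_mul_of_nonneg_left (hc j) (hprod j)).trans_eq (by ring)
      _ ≤ k * ∑' j, f j := by
          rw [← mul_sum]; exact mul_le_mul_of_nonneg_left (hf.sum_le_tsum _ fun j _ => hf0 j) hk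
  linarith

theorem lt_one_of_forall_inv_one_sub_le {x : ℕ → ℝ} {p C : ℝ} (hx : ∀ n, x n < 1)
    (hC : ∀ n, (1 - x n)⁻¹ ≤ C) (hp : Tendsto x atTop (nhds p)) : p < 1 := by
  have hC0 : 0 < C := (inv_pos.2 (sub_pos.2 (hx 0))).trans_le (hC 0)
  have hle : ∀ n, x n ≤ 1 - C⁻¹ := fun n => by
    linarith [(inv_le_comm₀ (sub_pos.2 (hx n)) hC0).1 (hC n)]
  linarith [le_of_tendsto' hp hle, inv_pos.2 hC0]

theorem bpve_survival_of_mean_tendsto_top_general (ρ : ℕ → ℕ → ℝ)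
    (hρ0 : ∀ n i, 0 ≤ ρ n i) (hρ1 : ∀ n, HasSum (ρ n) 1)
    (hρlt : ∀ n, ρ n 0 < 1)
    (hm2 : ∀ᶠ j in atTop, mom2 ρ j < ⊤)
    (hmean : Tendsto (mom ρ) atTop (nhds ⊤))
    (M k : ℝ) (hM : 1 ≤ M) (hk : 1 ≤ k)
    (hbound : ∀ᶠ n in atTop, mom2 ρ n / (mom ρ n) ^ 2 ≤ ENNReal.ofReal (k * M ^ n))
    (pe : ℝ) (hpe : Tendsto (fun j => Hseq ρ j 0) atTop (nhds pe)) :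
    pe < 1 := by
  have hgrow : ∀ᶠ j in atTop, ENNReal.ofReal (2 * M) < mom ρ j :=
    hmean.eventually (Ioi_mem_nhds ENNReal.ofReal_lt_top)
  obtain ⟨N, hN⟩ := eventually_atTop.1 ((hm2.and hbound).and hgrow)
  have hstep : ∀ j, ∀ z ∈ Ico (0 : ℝ) 1,
      (1 - Phi ρ j z)⁻¹ ≤ agrestiFactor ρ N j * (1 - z)⁻¹ + agrestiError ρ N j :=
    fun j z hz => inv_one_sub_phi_le_agrestiFactor (hρ0 j) (hρ1 j) (hρlt j)
      (fun hj => ⟨(pos_of_gt (hN j hj).2).ne', (hN j hj).1.1.ne⟩) hz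
  obtain ⟨C, hC⟩ := exists_forall_prod_add_sum_prod_mul_le (fun j => agrestiFactor_nonneg (hρlt j))
    hM (by linarith)
    (eventually_atTop.2 ⟨N, fun j hj => agrestiFactor_mul_le (by linarith) hj
      (ne_top_of_le_ne_top (hN j hj).1.1.ne mom_le_mom2) (hN j hj).2.le⟩)
    (fun j => agrestiError_le (by linarith) (by linarith) fun hj => (hN j hj).1.2)
  have hzero : (0 : ℝ) ∈ Ico (0 : ℝ) 1 := ⟨le_rfl, one_pos⟩
  refine lt_one_of_forall_inv_one_sub_le (C := C)
    (fun n => (mapsTo_hseq hρ0 hρ1 hρlt n hzero).2) (fun n => ?_) hpe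
  have h := inv_one_sub_hseq_le _ _ (fun j => agrestiFactor_nonneg (hρlt j))
    (fun j => phi_mapsTo (hρ0 j) (hρ1 j) (hρlt j)) hstep n 0 hzero
  rw [sub_zero, inv_one, mul_one] at h
  exact h.trans (hC n)

/-- Corollary, condition (4): a BPVE with positive first moments,
eventually finite second moments, `m_n → ∞` and `m_n⁽²⁾/m_n² ≤ k·Mⁿ` eventually
(for some `M, k ≥ 1`), survives, i.e. `p_e < 1`. -/
theorem bpve_survival_of_mean_tendsto_top (ρ : ℕ → ℕ → ℝ)
    (hρ0 : ∀ n i, 0 ≤ ρ n i) (hρ1 : ∀ n, HasSum (ρ n) 1)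
    (hρlt : ∀ n, ρ n 0 < 1)
    (hm : ∀ j, 0 < mom ρ j)
    (hm2 : ∀ᶠ j in atTop, mom2 ρ j < ⊤)
    (hmean : Tendsto (mom ρ) atTop (nhds ⊤))
    (M k : ℝ) (hM : 1 ≤ M) (hk : 1 ≤ k)
    (hbound : ∀ᶠ n in atTop, mom2 ρ n / (mom ρ n) ^ 2 ≤ ENNReal.ofReal (k * M ^ n))
    (pe : ℝ) (hpe : Tendsto (fun j => Hseq ρ j 0) atTop (nhds pe)) :
    pe < 1 :=
  bpve_survival_of_mean_tendsto_top_general ρ hρ0 hρ1 hρlt hm2 hmean M k hM hk hbound pe hpe
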